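/- arXiv:2411.14227 — 3 statements merged into one kernel-verified Lean document; each statement's English description precedes it below -/
import Mathlib

section
/- Let $\mathcal{C}$ be a clutter whose edge ideal $I(\mathcal{C})$ satisfies the strong persistence property, let $x$ be a new vertex, and let $\mathcal{C}'$ be the clutter whose edges are the full old vertex set $V(\mathcal{C})$ together with all cones $f \cup \{x\}$ for $f \in E(\mathcal{C})$. Then $I(\mathcal{C}')$ satisfies the strong persistence property, i.e., $(I(\mathcal{C}')^{k+1} : I(\mathcal{C}')) = I(\mathcal{C}')^k$ for all $k \ge 1$. -/
/-!
All ideals involved are monomial ideals, so membership in their powers and colon ideals is a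
condition on exponent vectors. With `v` the exponent of `∏_{i ∈ V} X i`, the exponents of
products of `m` generators of `I(𝒞')` are `(m - j) v + j e_x + b`, where `b` is a sum of `j`
edge exponents of `𝒞`. Suppose `c + a` dominates such an `(k+1)`-fold sum for every generator
exponent `a`. Testing `a = v` either yields `j ≤ k`, and cancelling one copy of `v` shows that
`c` dominates a `k`-fold sum, or shows `c_x ≥ k + 1`. In the latter case, if `c + f` dominates a
`(k+1)`-fold sum of `𝒞` for every edge `f`, strong persistence of `I(𝒞)` finishes; otherwise
testing `a = e_x + f` for a failing edge `f` must give `j ≤ k`, and `f ≤ v` again allows one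
copy of `v` to be cancelled.
-/

open MvPolynomial

/-- The edge ideal of a clutter given by its (finite) edge set. -/
noncomputable def edgeIdeal {n : ℕ} (K : Type*) [Field K] (E : Finset (Finset (Fin n))) :
    Ideal (MvPolynomial (Fin n) K) :=
  Ideal.span ((fun e => ∏ i ∈ e, (X i : MvPolynomial (Fin n) K)) '' (E : Set (Finset (Fin n))))

/-- The strong persistence property: `(I^{k+1} : I) = I^k` for all `k ≥ 1`. -/
def StrongPersistence {n : ℕ} {K : Type*} [Field K]
    (I : Ideal (MvPolynomial (Fin n) K)) : Prop :=
  ∀ k : ℕ, 1 ≤ k → Submodule.colon (I ^ (k + 1)) I = I ^ k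


open Pointwise

theorem Ideal.pow_le_colon_pow_succ {R : Type*} [CommSemiring R] (I : Ideal R) (k : ℕ) :
    I ^ k ≤ (I ^ (k + 1)).colon I := fun _ hp =>
  Submodule.mem_colon.mpr fun _ hq => by
    rw [smul_eq_mul, pow_succ]
    exact Ideal.mul_mem_mul hp hq

theorem Set.mem_nsmul_insert_vadd_iff {M : Type*} [AddCommMonoid M] {v e g : M} {A : Set M}
    {m : ℕ} :
    g ∈ m • insert v (e +ᵥ A) ↔ ∃ j ≤ m, ∃ b ∈ j • A, g = (m - j) • v + j • e + b := by
  induction m generalizing g with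
  | zero => simp
  | succ m ih =>
    rw [succ_nsmul, Set.mem_add]
    constructor
    · rintro ⟨h, hh, s, hs, rfl⟩
      obtain ⟨j, hj, b, hb, rfl⟩ := ih.mp hh
      rcases hs with rfl | ⟨a, ha, rfl⟩
      · refine ⟨j, by omega, b, hb, ?_⟩
        rw [show m + 1 - j = m - j + 1 by omega, succ_nsmul]
        abel
      · refine ⟨j + 1, by omega, b + a, Set.add_mem_add hb ha, ?_⟩
        rw [show m + 1 - (j + 1) = m - j by omega, succ_nsmul]
        simp only [vadd_eq_add]
        abel
    · rintro ⟨j, hj, b, hb, rfl⟩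
      rcases hj.lt_or_eq with hj | rfl
      · refine ⟨(m - j) • v + j • e + b, ih.mpr ⟨j, by omega, b, hb, rfl⟩, v,
          Set.mem_insert _ _, ?_⟩
        rw [show m + 1 - j = m - j + 1 by omega, succ_nsmul]
        abel
      · rw [succ_nsmul, Set.mem_add] at hb
        obtain ⟨b, hb, a, ha, rfl⟩ := hb
        refine ⟨m • e + b, ih.mpr ⟨m, le_rfl, b, hb, by simp⟩, e + a,
          Set.mem_insert_of_mem _ (Set.vadd_mem_vadd_set ha), ?_⟩
        rw [Nat.sub_self, zero_nsmul, succ_nsmul]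
        abel

namespace Finsupp

variable {σ : Type*} {x : σ} {j : ℕ}

theorem add_single_le_iff {f c : σ →₀ ℕ} (hf : f x = 0) :
    f + single x j ≤ c ↔ f ≤ c ∧ j ≤ c x := by
  refine ⟨fun h => ⟨le_self_add.trans h, by simpa [hf] using h x⟩, fun ⟨hfc, hj⟩ w => ?_⟩
  by_cases hw : w = x
  · subst hw
    simpa [hf] using hj
  · simpa [single_eq_of_ne hw] using hfc w

theorem le_of_le_add_single {f g : σ →₀ ℕ} (hf : f x = 0) (h : f ≤ g + single x j) : f ≤ g := by
  intro w
  by_cases hw : w = x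
  · subst hw
    simp [hf]
  · simpa [single_eq_of_ne hw] using h w

theorem apply_eq_zero_of_mem_nsmul {A : Set (σ →₀ ℕ)} (hA : ∀ a ∈ A, a x = 0) {b : σ →₀ ℕ}
    (hb : b ∈ j • A) : b x = 0 :=
  AddSubmonoid.nsmul_subset (S := AddMonoidHom.mker (applyAddHom (M := ℕ) x)) hA hb

end Finsupp

/-- Combinatorial form of `(I^{k+1} : I) = I^k` for the monomial ideal `I` generated by the
exponents in `A`. -/
def StrongPersistenceAt {σ : Type*} (A : Set (σ →₀ ℕ)) (k : ℕ) : Prop :=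
  ∀ c, (∀ a ∈ A, c + a ∈ upperClosure ((k + 1) • A)) → c ∈ upperClosure (k • A)

section Cone

variable {σ : Type*} {x : σ} {v : σ →₀ ℕ} {A : Set (σ →₀ ℕ)}

theorem mem_upperClosure_nsmul_insert_vadd_single_iff (hv : v x = 0) (hA : ∀ a ∈ A, a x = 0)
    {m : ℕ} {c : σ →₀ ℕ} :
    c ∈ upperClosure (m • insert v (Finsupp.single x 1 +ᵥ A)) ↔
      ∃ j ≤ m, j ≤ c x ∧ ∃ b ∈ j • A, (m - j) • v + b ≤ c := by
  simp only [mem_upperClosure, Set.mem_nsmul_insert_vadd_iff]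
  have hx : ∀ j, ∀ b ∈ j • A, ((m - j) • v + b) x = 0 := fun j b hb => by
    simp [hv, Finsupp.apply_eq_zero_of_mem_nsmul hA hb]
  constructor
  · rintro ⟨_, ⟨j, hj, b, hb, rfl⟩, hle⟩
    rw [add_right_comm, Finsupp.smul_single_one, Finsupp.add_single_le_iff (hx j b hb)] at hle
    exact ⟨j, hj, hle.2, b, hb, hle.1⟩
  · rintro ⟨j, hj, hjc, b, hb, hle⟩
    refine ⟨_, ⟨j, hj, b, hb, rfl⟩, ?_⟩
    rw [add_right_comm, Finsupp.smul_single_one, Finsupp.add_single_le_iff (hx j b hb)]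
    exact ⟨hle, hjc⟩

theorem StrongPersistenceAt.insert_vadd_single (hv : v x = 0) (hA : ∀ a ∈ A, a x = 0)
    (hAv : ∀ a ∈ A, a ≤ v) {k : ℕ} (hspp : StrongPersistenceAt A k) :
    StrongPersistenceAt (insert v (Finsupp.single x 1 +ᵥ A)) k := by
  intro c hc
  simp only [mem_upperClosure_nsmul_insert_vadd_single_iff hv hA] at hc ⊢
  obtain ⟨j, hj, hjc, b, hb, hle⟩ := hc v (Set.mem_insert _ _)
  rcases hj.lt_or_eq with hjk | rfl
  · refine ⟨j, Nat.lt_succ_iff.mp hjk, by simpa [hv] using hjc, b, hb, ?_⟩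
    rwa [show k + 1 - j = k - j + 1 by omega, succ_nsmul, ← add_right_comm,
      add_le_add_iff_right] at hle
  have hkc : k + 1 ≤ c x := by simpa [hv] using hjc
  by_cases hall : ∀ a ∈ A, c + a ∈ upperClosure ((k + 1) • A)
  · obtain ⟨b, hb, hbc⟩ := mem_upperClosure.mp (hspp c hall)
    exact ⟨k, le_rfl, by omega, b, hb, by simpa using hbc⟩
  push Not at hall
  obtain ⟨e, he, hce⟩ := hall
  obtain ⟨j, hj, -, b, hb, hle⟩ :=
    hc _ (Set.mem_insert_of_mem _ (Set.vadd_mem_vadd_set (a := Finsupp.single x 1) he))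
  rw [vadd_eq_add, ← add_assoc, add_right_comm] at hle
  have hle : (k + 1 - j) • v + b ≤ c + e :=
    Finsupp.le_of_le_add_single (by simp [hv, Finsupp.apply_eq_zero_of_mem_nsmul hA hb]) hle
  rcases hj.lt_or_eq with hjk | rfl
  · refine ⟨j, Nat.lt_succ_iff.mp hjk, by omega, b, hb, ?_⟩
    rw [show k + 1 - j = k - j + 1 by omega, succ_nsmul, ← add_right_comm] at hle
    exact (add_le_add_iff_right _).mp (hle.trans (add_le_add_right (hAv e he) c))
  · exact absurd (mem_upperClosure.mpr ⟨b, hb, by simpa using hle⟩) hce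

end Cone

namespace MvPolynomial

variable {σ R : Type*} [CommSemiring R]

variable (R) in
noncomputable def monomialIdeal (A : Set (σ →₀ ℕ)) :
    Ideal (MvPolynomial σ R) :=
  Ideal.span ((fun s => monomial s 1) '' A)

theorem mem_monomialIdeal_iff {A : Set (σ →₀ ℕ)} {p : MvPolynomial σ R} :
    p ∈ monomialIdeal R A ↔ ∀ c ∈ p.support, c ∈ upperClosure A := by
  simp only [monomialIdeal, mem_ideal_span_monomial_image, mem_upperClosure]

theorem monomialIdeal_pow (A : Set (σ →₀ ℕ)) (m : ℕ) :
    monomialIdeal R A ^ m = monomialIdeal R (m • A) := by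
  induction m with
  | zero => simp [monomialIdeal]
  | succ m ih =>
    rw [pow_succ, ih, succ_nsmul]
    simp only [monomialIdeal, Ideal.span_mul_span', ← Set.image2_add, ← Set.image2_mul,
      Set.image2_image_left, Set.image2_image_right, Set.image_image2, monomial_mul, one_mul]

theorem support_mul_monomial_one (p : MvPolynomial σ R) (a : σ →₀ ℕ) :
    (p * monomial a 1).support = p.support.map (addRightEmbedding a) :=
  AddMonoidAlgebra.support_coeff_mul_single p _ (by simp) a

theorem mem_colon_monomialIdeal_iff {A B : Set (σ →₀ ℕ)} {p : MvPolynomial σ R} :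
    p ∈ (monomialIdeal R B).colon (monomialIdeal R A) ↔
      ∀ c ∈ p.support, ∀ a ∈ A, c + a ∈ upperClosure B := by
  simp only [monomialIdeal, Ideal.colon_span, Submodule.mem_colon, Set.forall_mem_image,
    smul_eq_mul, mem_ideal_span_monomial_image, support_mul_monomial_one, Finset.forall_mem_map,
    addRightEmbedding_apply, mem_upperClosure]
  exact ⟨fun h c hc a ha => h ha c hc, fun h a ha c hc => h c hc a ha⟩

theorem strongPersistence_monomialIdeal_iff {n : ℕ} {K : Type*} [Field K]
    {A : Set (Fin n →₀ ℕ)} :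
    StrongPersistence (monomialIdeal K A) ↔ ∀ k, 1 ≤ k → StrongPersistenceAt A k := by
  refine forall₂_congr fun k _ => ?_
  rw [← (Ideal.pow_le_colon_pow_succ _ k).ge_iff_eq', SetLike.le_def]
  simp only [monomialIdeal_pow, mem_colon_monomialIdeal_iff, mem_monomialIdeal_iff]
  refine ⟨fun h c hc => ?_, fun h p hp c hc => h c (hp c hc)⟩
  exact @h (monomial c 1) (by simpa [support_monomial] using hc) c (by simp)

end MvPolynomial

namespace Finset

variable {σ : Type*}

noncomputable def sqfreeExponent (e : Finset σ) : σ →₀ ℕ :=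
  ∑ i ∈ e, Finsupp.single i 1

theorem sqfreeExponent_apply_of_notMem {e : Finset σ} {x : σ} (hx : x ∉ e) :
    e.sqfreeExponent x = 0 := by
  simp only [sqfreeExponent, Finsupp.finsetSum_apply]
  exact sum_eq_zero fun i hi => Finsupp.single_eq_of_ne (ne_of_mem_of_not_mem hi hx).symm

theorem sqfreeExponent_mono : Monotone (sqfreeExponent (σ := σ)) :=
  fun _ _ h => sum_le_sum_of_subset h

theorem sqfreeExponent_image_insert_image_insert [DecidableEq σ] {V : Finset σ}
    {E : Finset (Finset σ)} {x : σ} (hxE : ∀ e ∈ E, x ∉ e) :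
    sqfreeExponent '' ↑(insert V (E.image (insert x))) =
      insert V.sqfreeExponent (Finsupp.single x 1 +ᵥ sqfreeExponent '' ↑E) := by
  rw [coe_insert, Set.image_insert_eq, coe_image, Set.image_image, ← Set.image_vadd,
    Set.image_image]
  exact congrArg _ (Set.image_congr fun e he => sum_insert (hxE e he))

end Finset

theorem edgeIdeal_eq_monomialIdeal {n : ℕ} (K : Type*) [Field K] (E : Finset (Finset (Fin n))) :
    edgeIdeal K E = monomialIdeal K (Finset.sqfreeExponent '' E) := by
  rw [edgeIdeal, monomialIdeal, Set.image_image]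
  exact congrArg _ (Set.image_congr fun e _ => (monomial_sum_one _ _).symm)

theorem stmt10_general {n : ℕ} {K : Type*} [Field K]
    (V : Finset (Fin n)) (E : Finset (Finset (Fin n)))
    (hVE : ∀ e ∈ E, e ⊆ V)
    (x : Fin n) (hx : x ∉ V)
    (hspp : StrongPersistence (edgeIdeal K E)) :
    StrongPersistence (edgeIdeal K (insert V (E.image (insert x)))) := by
  have hxE : ∀ e ∈ E, x ∉ e := fun e he hxe => hx (hVE e he hxe)
  rw [edgeIdeal_eq_monomialIdeal, strongPersistence_monomialIdeal_iff] at hspp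
  rw [edgeIdeal_eq_monomialIdeal, Finset.sqfreeExponent_image_insert_image_insert hxE,
    strongPersistence_monomialIdeal_iff]
  refine fun k hk => (hspp k hk).insert_vadd_single
    (Finset.sqfreeExponent_apply_of_notMem hx) ?_ ?_
  · rintro _ ⟨e, he, rfl⟩
    exact Finset.sqfreeExponent_apply_of_notMem (hxE e he)
  · rintro _ ⟨e, he, rfl⟩
    exact Finset.sqfreeExponent_mono (hVE e he)

/-- If the clutter `𝒞` has the strong persistence property, `x ∉ V(𝒞)`,
and `𝒞'` has edges `{V(𝒞)} ∪ {f ∪ {x} : f ∈ E(𝒞)}`, then `I(𝒞')` has the strong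
persistence property. -/
theorem stmt10 {n : ℕ} {K : Type*} [Field K]
    (V : Finset (Fin n)) (E : Finset (Finset (Fin n)))
    (hVE : ∀ e ∈ E, e ⊆ V)
    (hclutter : ∀ e ∈ E, ∀ f ∈ E, e ⊆ f → e = f)
    (x : Fin n) (hx : x ∉ V)
    (hspp : StrongPersistence (edgeIdeal K E)) :
    StrongPersistence (edgeIdeal K (insert V (E.image (insert x)))) :=
  stmt10_general V E hVE x hx hspp
end

section
/- Let $X$ be a finite set and $x, y \notin X$ distinct new vertices, and let $\mathcal{C}$ be a clutter on $X \cup \{x,y\}$ such that every edge $e \in E(\mathcal{C})$ contains $x$ or $y$ but not both. Let $\mathcal{C}'$ be the clutter with $E(\mathcal{C}') = E(\mathcal{C}) \cup \{\{x,y\}\}$. Then $I(\mathcal{C}')$ satisfies the strong persistence property: $(I(\mathcal{C}')^{k+1} : I(\mathcal{C}')) = I(\mathcal{C}')^k$ for all $k \ge 1$. -/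
open MvPolynomial

/-!
All ideals involved are monomial ideals, so membership is decided exponent by exponent: with `D`
the set of exponent vectors of the edges, `I ^ m` is generated by the monomials of `m • D`, and an
exponent `u` of an element of `(I ^ (k + 1) : I)` has `u + d` above some element of `(k + 1) • D`
for every `d ∈ D`. Weigh vectors by `w v = v x + v y`: the edges of `𝒞` have weight `1` and
`χ = x + y` has weight `2`. Testing `u` against `χ` gives `k + 1` generators whose sum is
`≤ u + χ`. If `χ` is one of them, drop it. Otherwise their sum has weight `k + 1`, while testing `u`
against any edge of `𝒞` gives `w u ≥ k`; so the sum exceeds `u` in at most one of the coordinates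
`x`, `y`, and dropping a generator that is positive there leaves a sum `≤ u`.
-/

open Pointwise Finsupp

theorem Set.mem_nsmul_iff_exists_multiset {M : Type*} [AddCommMonoid M] {D : Set M} {m : ℕ}
    {v : M} :
    v ∈ m • D ↔ ∃ c : Multiset M, Multiset.card c = m ∧ (∀ d ∈ c, d ∈ D) ∧ c.sum = v := by
  induction m generalizing v with
  | zero =>
    simp only [zero_nsmul, Set.mem_zero, Multiset.card_eq_zero]
    constructor
    · rintro rfl
      exact ⟨0, rfl, by simp, rfl⟩
    · rintro ⟨c, rfl, -, rfl⟩
      rfl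
  | succ m ih =>
    simp only [succ_nsmul, Set.mem_add, ih]
    constructor
    · rintro ⟨-, ⟨c, rfl, hcD, rfl⟩, d, hd, rfl⟩
      refine ⟨d ::ₘ c, by simp, ?_, by simp [add_comm]⟩
      simpa [hd] using hcD
    · rintro ⟨c, hcard, hcD, rfl⟩
      obtain ⟨d, hd⟩ := Multiset.card_pos_iff_exists_mem.mp (by omega : 0 < Multiset.card c)
      obtain ⟨c, rfl⟩ := Multiset.exists_cons_of_mem hd
      refine ⟨c.sum, ⟨c, by simpa using hcard, fun e he => hcD e (by simp [he]), rfl⟩,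
        d, hcD d hd, by simp [add_comm]⟩

theorem AddMonoidHom.le_of_mem_nsmul {M : Type*} [AddCommMonoid M] {D : Set M} (w : M →+ ℕ)
    (hD : ∀ d ∈ D, 1 ≤ w d) {m : ℕ} {s : M} (hs : s ∈ m • D) : m ≤ w s := by
  obtain ⟨c, rfl, hcD, rfl⟩ := Set.mem_nsmul_iff_exists_multiset.mp hs
  simpa [map_multiset_sum] using
    Multiset.card_nsmul_le_sum (s := c.map w) (a := 1) (by simpa using fun d hd => hD d (hcD d hd))

theorem AddMonoidHom.map_multiset_sum_eq_card {M : Type*} [AddCommMonoid M] (w : M →+ ℕ)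
    {c : Multiset M} (h : ∀ d ∈ c, w d = 1) : w c.sum = Multiset.card c := by
  rw [map_multiset_sum, Multiset.map_congr rfl h, Multiset.map_const', Multiset.sum_replicate,
    smul_eq_mul, mul_one]

theorem Finsupp.le_of_le_add_single_of_apply_le {σ : Type*} {u v : σ →₀ ℕ} {x : σ}
    (h : v ≤ u + single x 1) (hx : v x ≤ u x) : v ≤ u := by
  intro j
  by_cases hj : j = x
  · exact hj ▸ hx
  · simpa [single_apply, Ne.symm hj] using h j

namespace Multiset

theorem sum_erase_le_of_sum_le_add {M : Type*} [AddCommMonoid M] [PartialOrder M]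
    [IsOrderedCancelAddMonoid M] [DecidableEq M] {c : Multiset M} {d u : M} (hd : d ∈ c)
    (h : c.sum ≤ u + d) : (c.erase d).sum ≤ u := by
  rw [← sum_erase hd, add_comm] at h
  exact le_of_add_le_add_right h

variable {σ : Type*} [DecidableEq σ]

theorem exists_sum_erase_le_of_sum_le_add_single {c : Multiset (σ →₀ ℕ)} (hc : c ≠ 0)
    {u : σ →₀ ℕ} {y : σ} (h : c.sum ≤ u + single y 1) : ∃ e ∈ c, (c.erase e).sum ≤ u := by
  by_cases hy : c.sum y ≤ u y
  · obtain ⟨e, he⟩ := exists_mem_of_ne_zero hc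
    refine ⟨e, he, le_trans ?_ (le_of_le_add_single_of_apply_le h hy)⟩
    rw [← sum_erase he]
    exact le_add_self
  · obtain ⟨e, he, hey⟩ : ∃ e ∈ c, e y ≠ 0 := by
      by_contra! h0
      have : c.sum y = 0 := by
        rw [← applyAddHom_apply, map_multiset_sum, sum_eq_zero]
        simpa using h0
      omega
    refine ⟨e, he, sum_erase_le_of_sum_le_add he (h.trans ?_)⟩
    gcongr
    exact single_le_iff.mpr (Nat.one_le_iff_ne_zero.mpr hey)

theorem exists_sum_erase_le_of_sum_le_add_single_add_single {c : Multiset (σ →₀ ℕ)} (hc : c ≠ 0) {u : σ →₀ ℕ} {x y : σ} (hxy : x ≠ y)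
    (h : c.sum ≤ u + (single x 1 + single y 1)) (hw : c.sum x + c.sum y ≤ u x + u y + 1) :
    ∃ e ∈ c, (c.erase e).sum ≤ u := by
  have hx := h x
  have hy := h y
  simp only [Finsupp.add_apply, single_eq_same, single_eq_of_ne hxy, single_eq_of_ne hxy.symm]
    at hx hy
  rcases (by omega : c.sum x ≤ u x ∨ c.sum y ≤ u y) with hcx | hcy
  · refine exists_sum_erase_le_of_sum_le_add_single (y := y) hc
      (le_of_le_add_single_of_apply_le (x := x) ?_ ?_)
    · simpa [add_assoc, add_comm (single x 1)] using h
    · simpa [single_eq_of_ne hxy] using hcx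
  · refine exists_sum_erase_le_of_sum_le_add_single (y := x) hc
      (le_of_le_add_single_of_apply_le (x := y) ?_ ?_)
    · simpa [add_assoc] using h
    · simpa [single_eq_of_ne hxy.symm] using hcy

end Multiset

open Multiset in
theorem exists_mem_nsmul_le_of_forall_exists_mem_nsmul_le_add {σ : Type*} {D : Set (σ →₀ ℕ)}
    {x y : σ} (hxy : x ≠ y) (hχ : single x 1 + single y 1 ∈ D)
    (hD : ∀ d ∈ D, d ≠ single x 1 + single y 1 → d x + d y = 1) {k : ℕ} {u : σ →₀ ℕ}
    (hu : ∀ d ∈ D, ∃ s ∈ (k + 1) • D, s ≤ u + d) : ∃ s ∈ k • D, s ≤ u := by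
  classical
  set χ := single x 1 + single y 1
  let w : (σ →₀ ℕ) →+ ℕ := applyAddHom x + applyAddHom y
  have hw : ∀ d ∈ D, 1 ≤ w d := by
    intro d hd
    by_cases hdχ : d = χ
    · simp [w, hdχ, χ, hxy, hxy.symm]
    · exact (hD d hd hdχ).ge
  obtain ⟨_, hs, hsu⟩ := hu χ hχ
  obtain ⟨c, hcard, hcD, rfl⟩ := Set.mem_nsmul_iff_exists_multiset.mp hs
  suffices ∃ e ∈ c, (c.erase e).sum ≤ u by
    obtain ⟨e, he, hle⟩ := this
    refine ⟨_, Set.mem_nsmul_iff_exists_multiset.mpr ⟨c.erase e, ?_, ?_, rfl⟩, hle⟩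
    · simp [card_erase_of_mem he, hcard]
    · exact fun d hd => hcD d (mem_of_mem_erase hd)
  by_cases hχc : χ ∈ c
  · exact ⟨χ, hχc, sum_erase_le_of_sum_le_add hχc hsu⟩
  have hc : c ≠ 0 := card_pos.mp (by omega)
  have hwc : w c.sum = k + 1 :=
    hcard ▸ w.map_multiset_sum_eq_card fun d hd => hD d (hcD d hd) (ne_of_mem_of_not_mem hd hχc)
  -- an edge `e ∈ c` has weight `1`, and `k + 1 ≤ w s ≤ w (u + e)`
  have hwu : k ≤ w u := by
    obtain ⟨e, he⟩ := exists_mem_of_ne_zero hc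
    obtain ⟨s, hs, hsu⟩ := hu e (hcD e he)
    have hwe : w e = 1 := hD e (hcD e he) (ne_of_mem_of_not_mem he hχc)
    have hle := w.le_of_mem_nsmul hw hs
    have := add_le_add (hsu x) (hsu y)
    simp only [w, AddMonoidHom.add_apply, applyAddHom_apply, Finsupp.add_apply] at hle hwe this ⊢
    omega
  refine exists_sum_erase_le_of_sum_le_add_single_add_single hc hxy hsu ?_
  simp only [w, AddMonoidHom.add_apply, applyAddHom_apply] at hwc hwu
  omega

namespace MvPolynomial

variable {σ R : Type*} [CommSemiring R]

theorem span_monomial_image_add (A B : Set (σ →₀ ℕ)) :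
    Ideal.span ((fun s => monomial s (1 : R)) '' (A + B)) =
      Ideal.span ((fun s => monomial s (1 : R)) '' A) *
        Ideal.span ((fun s => monomial s (1 : R)) '' B) := by
  rw [Ideal.span_mul_span', ← Set.image2_mul, Set.image2_image_left, Set.image2_image_right,
    ← Set.image2_add, Set.image_image2]
  simp only [monomial_mul, mul_one]

theorem span_monomial_image_nsmul (D : Set (σ →₀ ℕ)) (m : ℕ) :
    Ideal.span ((fun s => monomial s (1 : R)) '' (m • D)) =
      Ideal.span ((fun s => monomial s (1 : R)) '' D) ^ m := by
  induction m with
  | zero => simp [Ideal.one_eq_top]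
  | succ m ih => rw [succ_nsmul, span_monomial_image_add, ih, pow_succ]

theorem exists_le_add_of_mem_colon {S D : Set (σ →₀ ℕ)} {r : MvPolynomial σ R}
    (hr : r ∈ (Ideal.span ((fun s => monomial s (1 : R)) '' S)).colon
      (Ideal.span ((fun s => monomial s (1 : R)) '' D) : Set (MvPolynomial σ R)))
    {u : σ →₀ ℕ} (hu : u ∈ r.support) {d : σ →₀ ℕ} (hd : d ∈ D) :
    ∃ s ∈ S, s ≤ u + d := by
  have hmul := Submodule.mem_colon.mp hr _ (Ideal.subset_span (Set.mem_image_of_mem _ hd))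
  refine mem_ideal_span_monomial_image.mp hmul (u + d) ?_
  rwa [smul_eq_mul, mem_support_iff, coeff_mul_monomial, mul_one, ← mem_support_iff]

theorem prod_X_eq_monomial (e : Finset σ) :
    ∏ i ∈ e, (X i : MvPolynomial σ R) = monomial (∑ i ∈ e, single i 1) 1 :=
  (monomial_sum_one e _).symm

end MvPolynomial

theorem edgeIdeal_eq_span_monomial {n : ℕ} (K : Type*) [Field K] (E : Finset (Finset (Fin n))) :
    edgeIdeal K E = Ideal.span ((fun s => monomial s (1 : K)) ''
      ((fun e => ∑ i ∈ e, single i 1) '' (E : Set (Finset (Fin n))))) := by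
  rw [edgeIdeal, Set.image_image]
  simp_rw [prod_X_eq_monomial]

theorem stmt11_general {n : ℕ} {K : Type*} [Field K]
    (x y : Fin n) (hxy : x ≠ y)
    (E : Finset (Finset (Fin n)))
    (hsplit : ∀ e ∈ E, (x ∈ e ∧ y ∉ e) ∨ (x ∉ e ∧ y ∈ e)) :
    StrongPersistence (edgeIdeal K (insert {x, y} E)) := by
  have hpair : ∑ i ∈ ({x, y} : Finset (Fin n)), single i 1 = single x 1 + single y 1 :=
    Finset.sum_pair hxy
  intro k _
  refine le_antisymm (fun r hr => ?_) fun r hr => Submodule.mem_colon.mpr fun p hp => ?_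
  · rw [edgeIdeal_eq_span_monomial, ← span_monomial_image_nsmul] at hr ⊢
    refine mem_ideal_span_monomial_image.mpr fun u hu =>
      exists_mem_nsmul_le_of_forall_exists_mem_nsmul_le_add hxy ?_ ?_
        fun d hd => exists_le_add_of_mem_colon hr hu hd
    · exact ⟨{x, y}, by simp, hpair⟩
    rintro _ ⟨e, he, rfl⟩ hne
    rcases Finset.mem_insert.mp he with rfl | he
    · exact absurd hpair hne
    · rcases hsplit e he with ⟨hx, hy⟩ | ⟨hx, hy⟩ <;> simp [single_apply, hx, hy]
  · rw [smul_eq_mul, pow_succ]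
    exact Ideal.mul_mem_mul hr hp

/-- If every edge of the clutter `𝒞` on `X ∪ {x,y}` contains exactly one
of `x, y`, then adding the edge `{x,y}` yields a clutter with the strong persistence
property. -/
theorem stmt11 {n : ℕ} {K : Type*} [Field K]
    (Xs : Finset (Fin n)) (x y : Fin n) (hxy : x ≠ y)
    (hx : x ∉ Xs) (hy : y ∉ Xs)
    (E : Finset (Finset (Fin n)))
    (hVE : ∀ e ∈ E, e ⊆ insert x (insert y Xs))
    (hclutter : ∀ e ∈ E, ∀ f ∈ E, e ⊆ f → e = f)
    (hsplit : ∀ e ∈ E, (x ∈ e ∧ y ∉ e) ∨ (x ∉ e ∧ y ∈ e)) :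
    StrongPersistence (edgeIdeal K (insert {x, y} E)) :=
  stmt11_general x y hxy E hsplit
end

section
/- Let $\mathcal{C}$ be a clutter with edges $e_1,\ldots,e_r$ ($r \ge 2$) such that $e_1 = \{x,y\}$ has cardinality two, $e_1 \cap e_2 = \emptyset$, and $e_j \cap e_1 \ne \emptyset$ for all $3 \le j \le r$. Then the edge ideal $I(\mathcal{C})$ has the strong persistence property: $(I(\mathcal{C})^{k+1} : I(\mathcal{C})) = I(\mathcal{C})^k$ for all $k \ge 1$. -/
open MvPolynomial

/-!
All ideals involved are monomial, so it suffices to show: if `m · x^e₁` and `m · x^e₂` are both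
divisible by products of `k + 1` edges, say of the multisets `B` and `B'`, then `m` is divisible by
a product of `k` edges. If `e₂ ∈ B'` or `e₁ ∈ B`, drop that edge. Otherwise every edge of `B'` meets
`e₁ = {x, y}`, so `deg_x m + deg_y m ≥ k + 1`; by the clutter property no edge of `B` contains both
`x` and `y`, so `deg_x + deg_y` of the product of `B` is at most `k + 1`. Hence that product exceeds
`m` in at most one of `x`, `y`, and by one only, and dropping an edge of `B` through that variable
leaves `k` edges whose product divides `m`.
-/

namespace Multiset

variable {α : Type*} {p q : α → Prop} [DecidablePred p] [DecidablePred q]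

theorem card_le_countP_add_countP {s : Multiset α} (h : ∀ a ∈ s, p a ∨ q a) :
    card s ≤ countP p s + countP q s := by
  induction s using Multiset.induction_on with
  | empty => simp
  | cons a s ih =>
    simp only [mem_cons, forall_eq_or_imp] at h
    have := ih h.2
    simp only [countP_cons, card_cons]
    rcases h.1 with ha | ha <;> simp [ha] <;> split_ifs <;> omega

theorem countP_add_countP_le_card {s : Multiset α} (h : ∀ a ∈ s, ¬(p a ∧ q a)) :
    countP p s + countP q s ≤ card s := by
  induction s using Multiset.induction_on with
  | empty => simp
  | cons a s ih =>
    simp only [mem_cons, forall_eq_or_imp] at h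
    have := ih h.2
    simp only [countP_cons, card_cons]
    split_ifs <;> first | omega | tauto

end Multiset

section EdgeExponents

variable {σ : Type*}

noncomputable def edgeExp (e : Finset σ) : σ →₀ ℕ := ∑ i ∈ e, Finsupp.single i 1

noncomputable def sumEdgeExp (S : Multiset (Finset σ)) : σ →₀ ℕ := (S.map edgeExp).sum

theorem edgeExp_apply [DecidableEq σ] (e : Finset σ) (j : σ) :
    edgeExp e j = if j ∈ e then 1 else 0 := by
  simp [edgeExp, Finsupp.finsetSum_apply, Finsupp.single_apply]

theorem prod_X_eq_monomial_edgeExp {R : Type*} [CommSemiring R] (e : Finset σ) :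
    ∏ i ∈ e, (X i : MvPolynomial σ R) = monomial (edgeExp e) 1 := by
  simp [edgeExp, X, monomial_sum_one]

theorem sumEdgeExp_apply [DecidableEq σ] (S : Multiset (Finset σ)) (j : σ) :
    sumEdgeExp S j = S.countP (j ∈ ·) := by
  induction S using Multiset.induction_on with
  | empty => simp [sumEdgeExp]
  | cons e S ih =>
    simp [sumEdgeExp, ← ih, edgeExp_apply, Multiset.countP_cons, add_comm]

theorem sumEdgeExp_erase_le_iff [DecidableEq σ] {S : Multiset (Finset σ)} {f : Finset σ}
    (hf : f ∈ S) {a : σ →₀ ℕ} : sumEdgeExp (S.erase f) ≤ a ↔ sumEdgeExp S ≤ a + edgeExp f := by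
  rw [sumEdgeExp, sumEdgeExp, ← Multiset.sum_map_erase hf, add_comm a, add_le_add_iff_left]

theorem le_add_edgeExp_of_le_add_edgeExp_pair [DecidableEq σ] {c a : σ →₀ ℕ} {x y : σ}
    {f : Finset σ} (h : c ≤ a + edgeExp {x, y}) (hx : c x ≤ a x + edgeExp f x)
    (hy : c y ≤ a y + edgeExp f y) : c ≤ a + edgeExp f := by
  intro j
  by_cases hjx : j = x
  · subst hjx; simpa using hx
  by_cases hjy : j = y
  · subst hjy; simpa using hy
  exact le_add_right (by simpa [edgeExp_apply, hjx, hjy] using h j)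

theorem exists_edges_sumEdgeExp_le_of_mem [DecidableEq σ] {E : Set (Finset σ)} {k : ℕ}
    {a : σ →₀ ℕ} {S : Multiset (Finset σ)} (hS : ∀ e ∈ S, e ∈ E)
    (hcard : Multiset.card S = k + 1) {f : Finset σ} (hf : f ∈ S)
    (hle : sumEdgeExp S ≤ a + edgeExp f) :
    ∃ C : Multiset (Finset σ), (∀ e ∈ C, e ∈ E) ∧ Multiset.card C = k ∧ sumEdgeExp C ≤ a :=
  ⟨S.erase f, fun e he => hS e (Multiset.mem_of_mem_erase he),
    by rw [Multiset.card_erase_of_mem hf, hcard]; rfl, (sumEdgeExp_erase_le_iff hf).2 hle⟩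

theorem exists_mem_sumEdgeExp_le_add_edgeExp [DecidableEq σ] {S : Multiset (Finset σ)}
    {a : σ →₀ ℕ} {x y : σ} (hS : sumEdgeExp S ≤ a + edgeExp {x, y})
    (hxy : ∀ e ∈ S, ¬(x ∈ e ∧ y ∈ e)) (hcard : Multiset.card S ≤ a x + a y) (hne : S ≠ 0) :
    ∃ f ∈ S, sumEdgeExp S ≤ a + edgeExp f := by
  have hsum : sumEdgeExp S x + sumEdgeExp S y ≤ Multiset.card S := by
    rw [sumEdgeExp_apply, sumEdgeExp_apply]
    exact Multiset.countP_add_countP_le_card hxy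
  have hx : sumEdgeExp S x ≤ a x + 1 := by simpa [edgeExp_apply] using hS x
  have hy : sumEdgeExp S y ≤ a y + 1 := by simpa [edgeExp_apply] using hS y
  suffices ∃ f ∈ S, sumEdgeExp S x ≤ a x + edgeExp f x ∧ sumEdgeExp S y ≤ a y + edgeExp f y by
    obtain ⟨f, hf, hfx, hfy⟩ := this
    exact ⟨f, hf, le_add_edgeExp_of_le_add_edgeExp_pair hS hfx hfy⟩
  -- at most one of the two coordinates overflows, and an edge through it repairs it
  by_cases hax : a x < sumEdgeExp S x
  · obtain ⟨f, hf, hxf⟩ : ∃ f ∈ S, x ∈ f := by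
      rw [← Multiset.countP_pos, ← sumEdgeExp_apply]; omega
    refine ⟨f, hf, ?_, ?_⟩ <;> simp only [edgeExp_apply, hxf, if_true] <;> omega
  by_cases hay : a y < sumEdgeExp S y
  · obtain ⟨f, hf, hyf⟩ : ∃ f ∈ S, y ∈ f := by
      rw [← Multiset.countP_pos, ← sumEdgeExp_apply]; omega
    refine ⟨f, hf, ?_, ?_⟩ <;> simp only [edgeExp_apply, hyf, if_true] <;> omega
  obtain ⟨f, hf⟩ := Multiset.exists_mem_of_ne_zero hne
  exact ⟨f, hf, by omega, by omega⟩

theorem exists_edges_sumEdgeExp_le [DecidableEq σ] {E : Set (Finset σ)}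
    (hclutter : ∀ e ∈ E, ∀ f ∈ E, e ⊆ f → e = f) {x y : σ} {e₂ : Finset σ}
    (he₁ : {x, y} ∈ E) (hdisj : Disjoint {x, y} e₂)
    (hmeet : ∀ e ∈ E, e ≠ {x, y} → e ≠ e₂ → (e ∩ {x, y}).Nonempty)
    {k : ℕ} {a : σ →₀ ℕ} {B B' : Multiset (Finset σ)}
    (hB : ∀ e ∈ B, e ∈ E) (hBcard : Multiset.card B = k + 1)
    (hBle : sumEdgeExp B ≤ a + edgeExp {x, y})
    (hB' : ∀ e ∈ B', e ∈ E) (hB'card : Multiset.card B' = k + 1)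
    (hB'le : sumEdgeExp B' ≤ a + edgeExp e₂) :
    ∃ C : Multiset (Finset σ), (∀ e ∈ C, e ∈ E) ∧ Multiset.card C = k ∧ sumEdgeExp C ≤ a := by
  by_cases h₂ : e₂ ∈ B'
  · exact exists_edges_sumEdgeExp_le_of_mem hB' hB'card h₂ hB'le
  have hxe₂ : x ∉ e₂ := Finset.disjoint_left.1 hdisj (by simp)
  have hye₂ : y ∉ e₂ := Finset.disjoint_left.1 hdisj (by simp)
  -- every edge of `B'` meets `{x, y}`, and `e₂` contributes nothing at `x` or `y`
  have hcard : Multiset.card B ≤ a x + a y := by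
    have hmeets : ∀ e ∈ B', x ∈ e ∨ y ∈ e := by
      intro e he
      by_cases h₁ : e = {x, y}
      · simp [h₁]
      obtain ⟨z, hz⟩ := hmeet e (hB' e he) h₁ (fun h => h₂ (h ▸ he))
      simp only [Finset.mem_inter, Finset.mem_insert, Finset.mem_singleton] at hz
      rcases hz with ⟨hz, rfl | rfl⟩ <;> simp [hz]
    have := Multiset.card_le_countP_add_countP hmeets
    have hx := hB'le x
    have hy := hB'le y
    simp only [Finsupp.add_apply, edgeExp_apply, hxe₂, hye₂, if_false, sumEdgeExp_apply] at hx hy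
    omega
  by_cases h₁ : {x, y} ∈ B
  · exact exists_edges_sumEdgeExp_le_of_mem hB hBcard h₁ hBle
  have hxy : ∀ e ∈ B, ¬(x ∈ e ∧ y ∈ e) := by
    rintro e he ⟨hx, hy⟩
    have hsub : {x, y} ⊆ e := by simp [Finset.insert_subset_iff, hx, hy]
    exact h₁ (hclutter _ he₁ e (hB e he) hsub ▸ he)
  have hne : B ≠ 0 := fun h => by simp [h] at hBcard
  obtain ⟨f, hf, hle⟩ := exists_mem_sumEdgeExp_le_add_edgeExp hBle hxy hcard hne
  exact exists_edges_sumEdgeExp_le_of_mem hB hBcard hf hle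

open scoped Pointwise

def edgeExponents (E : Set (Finset σ)) (k : ℕ) : Set (σ →₀ ℕ) :=
  sumEdgeExp '' {S | (∀ e ∈ S, e ∈ E) ∧ Multiset.card S = k}

theorem edgeExponents_succ (E : Set (Finset σ)) (k : ℕ) :
    edgeExponents E (k + 1) = edgeExponents E k + edgeExp '' E := by
  ext d
  constructor
  · rintro ⟨S, ⟨hS, hcard⟩, rfl⟩
    obtain ⟨e, he⟩ := Multiset.card_pos_iff_exists_mem.1 (by omega : 0 < Multiset.card S)
    obtain ⟨S, rfl⟩ := Multiset.exists_cons_of_mem he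
    refine ⟨sumEdgeExp S, ⟨S, ⟨fun f hf => hS f (Multiset.mem_cons_of_mem hf), ?_⟩, rfl⟩,
      edgeExp e, ⟨e, hS e he, rfl⟩, by simp [sumEdgeExp, add_comm]⟩
    simpa using hcard
  · rintro ⟨_, ⟨S, ⟨hS, hcard⟩, rfl⟩, _, ⟨e, he, rfl⟩, rfl⟩
    refine ⟨e ::ₘ S, ⟨?_, by simp [hcard]⟩, by simp [sumEdgeExp, add_comm]⟩
    simpa [he] using hS

theorem image_monomial_one_add {R : Type*} [CommSemiring R] (A B : Set (σ →₀ ℕ)) :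
    (fun d => monomial d (1 : R)) '' (A + B) =
      (fun d => monomial d (1 : R)) '' A * (fun d => monomial d (1 : R)) '' B := by
  rw [← Set.image2_add, ← Set.image2_mul, Set.image_image2_distrib]
  intro a b
  rw [monomial_mul, one_mul]

theorem span_prod_X_pow {R : Type*} [CommSemiring R] (E : Set (Finset σ)) (k : ℕ) :
    Ideal.span ((fun e => ∏ i ∈ e, (X i : MvPolynomial σ R)) '' E) ^ k =
      Ideal.span ((fun d => monomial d (1 : R)) '' edgeExponents E k) := by
  induction k with
  | zero =>
    have : edgeExponents E 0 = {0} := by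
      ext d
      simp [edgeExponents, sumEdgeExp, eq_comm]
    simp [this]
  | succ k ih =>
    rw [pow_succ, ih, Ideal.span_mul_span', edgeExponents_succ, image_monomial_one_add,
      Set.image_image]
    simp only [prod_X_eq_monomial_edgeExp]

theorem exists_le_add_of_mul_monomial_mem {R : Type*} [CommSemiring R] {s : Set (σ →₀ ℕ)}
    {r : MvPolynomial σ R} {d : σ →₀ ℕ}
    (h : r * monomial d 1 ∈ Ideal.span ((fun d => monomial d (1 : R)) '' s)) {m : σ →₀ ℕ}
    (hm : m ∈ r.support) : ∃ t ∈ s, t ≤ m + d :=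
  mem_ideal_span_monomial_image.1 h (m + d) (by
    rwa [mem_support_iff, coeff_mul_monomial, mul_one, ← mem_support_iff])

end EdgeExponents

theorem stmt13_general {n : ℕ} {K : Type*} [Field K]
    (E : Finset (Finset (Fin n)))
    (hclutter : ∀ e ∈ E, ∀ f ∈ E, e ⊆ f → e = f)
    (x y : Fin n)
    (e₁ e₂ : Finset (Fin n)) (he₁ : e₁ ∈ E) (he₂ : e₂ ∈ E)
    (he₁eq : e₁ = {x, y}) (hdisj : Disjoint e₁ e₂)
    (hmeet : ∀ e ∈ E, e ≠ e₁ → e ≠ e₂ → (e ∩ e₁).Nonempty) :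
    StrongPersistence (edgeIdeal K E) := by
  classical
  subst he₁eq
  intro k _
  have hpow (j : ℕ) : edgeIdeal K E ^ j =
      Ideal.span ((fun d => monomial d (1 : K)) '' edgeExponents (E : Set (Finset (Fin n))) j) :=
    span_prod_X_pow _ j
  refine le_antisymm (fun r hr => ?_) (fun r hr => ?_)
  · have hmul : ∀ e ∈ E, ∀ m ∈ r.support, ∃ t ∈ edgeExponents (E : Set (Finset (Fin n))) (k + 1),
        t ≤ m + edgeExp e := fun e he m hm =>
      exists_le_add_of_mul_monomial_mem (by
        rw [← hpow, ← prod_X_eq_monomial_edgeExp]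
        exact Submodule.mem_colon.1 hr _ (Ideal.subset_span ⟨e, he, rfl⟩)) hm
    rw [hpow, mem_ideal_span_monomial_image]
    intro m hm
    obtain ⟨_, ⟨B, ⟨hB, hBcard⟩, rfl⟩, hBle⟩ := hmul _ he₁ m hm
    obtain ⟨_, ⟨B', ⟨hB', hB'card⟩, rfl⟩, hB'le⟩ := hmul _ he₂ m hm
    obtain ⟨C, hC, hCcard, hCle⟩ := exists_edges_sumEdgeExp_le hclutter he₁ hdisj hmeet
      hB hBcard hBle hB' hB'card hB'le
    exact ⟨_, ⟨C, ⟨hC, hCcard⟩, rfl⟩, hCle⟩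
  · exact Submodule.mem_colon.2 fun p hp => pow_succ (edgeIdeal K E) k ▸ Ideal.mul_mem_mul hr hp

/-- A clutter containing an edge `e₁ = {x,y}` of cardinality two, an edge
`e₂` disjoint from `e₁`, and such that every other edge meets `e₁`, has the strong
persistence property. -/
theorem stmt13 {n : ℕ} {K : Type*} [Field K]
    (E : Finset (Finset (Fin n)))
    (hclutter : ∀ e ∈ E, ∀ f ∈ E, e ⊆ f → e = f)
    (x y : Fin n) (hxy : x ≠ y)
    (e₁ e₂ : Finset (Fin n)) (he₁ : e₁ ∈ E) (he₂ : e₂ ∈ E)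
    (he₁eq : e₁ = {x, y}) (hdisj : Disjoint e₁ e₂)
    (hmeet : ∀ e ∈ E, e ≠ e₁ → e ≠ e₂ → (e ∩ e₁).Nonempty) :
    StrongPersistence (edgeIdeal K E) :=
  stmt13_general E hclutter x y e₁ e₂ he₁ he₂ he₁eq hdisj hmeet
end
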